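/- Suppose the coupling matrices satisfy C_- = 0, and C_+·Ω_+† = 0 and C_+·Ω_-⊤ = 0. Then for every s ∈ ℂ such that s·I_{2n} - A is invertible and s·I_m - (1/2)·C_+·C_+† and s·I_m - (1/2)·C_+^#·C_+⊤ are invertible, the annihilation–creation-form transfer function is block diagonal: G[s] = [[ (s·I_m + (1/2)·C_+·C_+†)·(s·I_m - (1/2)·C_+·C_+†)^{-1}, 0],[0, (s·I_m + (1/2)·C_+^#·C_+⊤)·(s·I_m - (1/2)·C_+^#·C_+⊤)^{-1} ]]; in particular BAE measurements are realized. -/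

import Mathlib

open Matrix Complex

noncomputable section

/-- The doubled-up matrix `Δ(U, V) = [[U, V],[V^#, U^#]]`. -/
def DeltaM {k r : ℕ} (U V : Matrix (Fin k) (Fin r) ℂ) :
    Matrix (Fin k ⊕ Fin k) (Fin r ⊕ Fin r) ℂ :=
  fromBlocks U V (V.map (starRingEnd ℂ)) (U.map (starRingEnd ℂ))

/-- `J_k = diag(I_k, -I_k)`. -/
def Jdg (k : ℕ) : Matrix (Fin k ⊕ Fin k) (Fin k ⊕ Fin k) ℂ :=
  fromBlocks 1 0 0 (-1)

/-- `𝒞♭ = Jₙ · 𝒞† · Jₘ` for `𝒞 = Δ(C₋, C₊)`. -/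
def ACflat {m n : ℕ} (Cm Cp : Matrix (Fin m) (Fin n) ℂ) :
    Matrix (Fin n ⊕ Fin n) (Fin m ⊕ Fin m) ℂ :=
  Jdg n * (DeltaM Cm Cp)ᴴ * Jdg m

/-- `A = -i Jₙ Ω - (1/2) 𝒞♭ 𝒞` in the annihilation–creation form. -/
def ACA {m n : ℕ} (Cm Cp : Matrix (Fin m) (Fin n) ℂ) (Om Op : Matrix (Fin n) (Fin n) ℂ) :
    Matrix (Fin n ⊕ Fin n) (Fin n ⊕ Fin n) ℂ :=
  (-Complex.I) • (Jdg n * DeltaM Om Op) - (1/2 : ℂ) • (ACflat Cm Cp * DeltaM Cm Cp)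

/-- The annihilation–creation-form transfer function
`G[s] = I + 𝒞 (sI - A)⁻¹ B` with `B = -𝒞♭` (identity scattering matrix). -/
def ACG {m n : ℕ} (Cm Cp : Matrix (Fin m) (Fin n) ℂ) (Om Op : Matrix (Fin n) (Fin n) ℂ)
    (s : ℂ) : Matrix (Fin m ⊕ Fin m) (Fin m ⊕ Fin m) ℂ :=
  1 + DeltaM Cm Cp *
    (s • (1 : Matrix (Fin n ⊕ Fin n) (Fin n ⊕ Fin n) ℂ) - ACA Cm Cp Om Op)⁻¹ *
    (-(ACflat Cm Cp))

private theorem fromBlocks_sub' {l mm nn o : Type*} {α : Type*} [Sub α]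
    (A : Matrix nn l α) (B : Matrix nn mm α) (C : Matrix o l α) (D : Matrix o mm α)
    (A' : Matrix nn l α) (B' : Matrix nn mm α) (C' : Matrix o l α) (D' : Matrix o mm α) :
    fromBlocks A B C D - fromBlocks A' B' C' D' =
      fromBlocks (A - A') (B - B') (C - C') (D - D') := by
  ext (i | i) (j | j) <;> rfl


/-- C₋ = 0, C₊Ω₊† = 0, C₊Ω₋ᵀ = 0 ⟹ the annihilation–creation-form
transfer function is block diagonal with the stated diagonal blocks. -/
theorem stmt16 {m n : ℕ} (Cm Cp : Matrix (Fin m) (Fin n) ℂ)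
    (Om Op : Matrix (Fin n) (Fin n) ℂ)
    (hOmHerm : Omᴴ = Om) (hOpSymm : Opᵀ = Op)
    (hCm : Cm = 0) (h1 : Cp * Opᴴ = 0) (h2 : Cp * Omᵀ = 0)
    (s : ℂ)
    (hs : IsUnit (s • (1 : Matrix (Fin n ⊕ Fin n) (Fin n ⊕ Fin n) ℂ) - ACA Cm Cp Om Op))
    (hs1 : IsUnit (s • (1 : Matrix (Fin m) (Fin m) ℂ) - (1/2 : ℂ) • (Cp * Cpᴴ)))
    (hs2 : IsUnit (s • (1 : Matrix (Fin m) (Fin m) ℂ)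
      - (1/2 : ℂ) • (Cp.map (starRingEnd ℂ) * Cpᵀ))) :
    ACG Cm Cp Om Op s =
      fromBlocks
        ((s • (1 : Matrix (Fin m) (Fin m) ℂ) + (1/2 : ℂ) • (Cp * Cpᴴ)) *
          (s • (1 : Matrix (Fin m) (Fin m) ℂ) - (1/2 : ℂ) • (Cp * Cpᴴ))⁻¹)
        0 0
        ((s • (1 : Matrix (Fin m) (Fin m) ℂ) + (1/2 : ℂ) • (Cp.map (starRingEnd ℂ) * Cpᵀ)) *
          (s • (1 : Matrix (Fin m) (Fin m) ℂ) - (1/2 : ℂ) • (Cp.map (starRingEnd ℂ) * Cpᵀ))⁻¹) := by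
  subst hCm
  set c := starRingEnd ℂ with hc
  -- derived orthogonality facts
  have f1 : Op * Cpᴴ = 0 := by
    have := congrArg conjTranspose h1
    simpa [conjTranspose_mul] using this
  have f2 : Om * Cpᵀ = 0 := by
    have := congrArg transpose h2
    simpa [transpose_mul] using this
  have hmapCh : (Cpᴴ).map c = Cpᵀ := by ext i j; simp [conjTranspose_apply, hc]
  have hmapCt : (Cpᵀ).map c = Cpᴴ := by ext i j; simp [conjTranspose_apply, hc]
  have hmapPcH : (Cp.map c)ᴴ = Cpᵀ := by ext i j; simp [conjTranspose_apply, hc]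
  have f3 : Op.map c * Cpᵀ = 0 := by
    have := congrArg (fun M => M.map c) f1
    simpa [Matrix.map_mul, hmapCh] using this
  have f4 : Om.map c * Cpᴴ = 0 := by
    have := congrArg (fun M => M.map c) f2
    simpa [Matrix.map_mul, hmapCt] using this
  -- abbreviations
  set D1 : Matrix (Fin m) (Fin m) ℂ :=
    s • (1 : Matrix (Fin m) (Fin m) ℂ) - (1/2 : ℂ) • (Cp * Cpᴴ) with hD1
  set D2 : Matrix (Fin m) (Fin m) ℂ :=
    s • (1 : Matrix (Fin m) (Fin m) ℂ) - (1/2 : ℂ) • (Cp.map c * Cpᵀ) with hD2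
  set BB : Matrix (Fin n ⊕ Fin n) (Fin m ⊕ Fin m) ℂ :=
    fromBlocks 0 Cpᵀ Cpᴴ 0 with hBB
  set X : Matrix (Fin n ⊕ Fin n) (Fin n ⊕ Fin n) ℂ :=
    s • (1 : Matrix (Fin n ⊕ Fin n) (Fin n ⊕ Fin n) ℂ) - ACA 0 Cp Om Op with hX
  have hmap0 : (0 : Matrix (Fin m) (Fin n) ℂ).map c = 0 := Matrix.map_zero _ (map_zero c)
  have hflat : ACflat 0 Cp = fromBlocks 0 (-Cpᵀ) (-Cpᴴ) 0 := by
    simp only [ACflat, DeltaM, Jdg, hmap0, conjTranspose_zero,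
      fromBlocks_conjTranspose, hmapPcH, fromBlocks_multiply]
    simp
    exact hmapPcH
  have hB : -(ACflat 0 Cp) = BB := by
    rw [hflat, hBB, fromBlocks_neg]
    simp
  have hSA : X = fromBlocks
      (s • 1 + Complex.I • Om - (1/2 : ℂ) • (Cpᵀ * Cp.map c)) (Complex.I • Op)
      (-(Complex.I • Op.map c))
      (s • 1 - Complex.I • Om.map c - (1/2 : ℂ) • (Cpᴴ * Cp)) := by
    rw [hX, ACA, hflat]
    simp only [DeltaM, Jdg, hmap0, fromBlocks_multiply, fromBlocks_smul,
      ← fromBlocks_one, fromBlocks_sub', smul_zero]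
    simp only [Matrix.one_mul, Matrix.mul_one, Matrix.zero_mul, Matrix.mul_zero,
      Matrix.neg_mul, Matrix.mul_neg, add_zero, zero_add, zero_sub, sub_zero,
      smul_neg, neg_neg, smul_zero, neg_zero]
    simp only [← hc, hmap0, Matrix.mul_zero]
    refine fromBlocks_inj.mpr ⟨?_, ?_, ?_, ?_⟩ <;> module
  have hKey : X * BB = BB * fromBlocks D1 0 0 D2 := by
    rw [hSA, hBB, fromBlocks_multiply, fromBlocks_multiply]
    refine fromBlocks_inj.mpr ⟨?_, ?_, ?_, ?_⟩
    · simp [Matrix.smul_mul, f1]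
    · rw [hD2]
      simp only [Matrix.mul_zero, Matrix.zero_mul, add_zero, zero_add,
        Matrix.sub_mul, Matrix.add_mul, Matrix.mul_sub,
        Matrix.one_mul, Matrix.mul_one, Matrix.smul_mul, Matrix.mul_smul, f2, smul_zero,
        Matrix.mul_assoc]
      try abel
    · rw [hD1]
      simp only [Matrix.mul_zero, Matrix.zero_mul, add_zero, zero_add,
        Matrix.sub_mul, Matrix.add_mul, Matrix.mul_sub,
        Matrix.one_mul, Matrix.mul_one, Matrix.smul_mul, Matrix.mul_smul, f4, smul_zero,
        Matrix.neg_mul, Matrix.mul_assoc]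
      try abel
    · simp [Matrix.smul_mul, Matrix.neg_mul, f3]
  have hdet : IsUnit X.det := (Matrix.isUnit_iff_isUnit_det _).mp (hX ▸ hs)
  have hD1det : IsUnit D1.det := (Matrix.isUnit_iff_isUnit_det _).mp hs1
  have hD2det : IsUnit D2.det := (Matrix.isUnit_iff_isUnit_det _).mp hs2
  have hE : fromBlocks D1 0 0 D2 * fromBlocks D1⁻¹ 0 0 D2⁻¹ = 1 := by
    rw [fromBlocks_multiply, ← fromBlocks_one]
    simp [Matrix.mul_nonsing_inv _ hD1det, Matrix.mul_nonsing_inv _ hD2det]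
  have hXB : X⁻¹ * BB = BB * fromBlocks D1⁻¹ 0 0 D2⁻¹ := by
    calc X⁻¹ * BB = X⁻¹ * BB * (fromBlocks D1 0 0 D2 * fromBlocks D1⁻¹ 0 0 D2⁻¹) := by
          rw [hE, Matrix.mul_one]
      _ = X⁻¹ * (X * BB) * fromBlocks D1⁻¹ 0 0 D2⁻¹ := by
          rw [hKey]; simp only [Matrix.mul_assoc]
      _ = BB * fromBlocks D1⁻¹ 0 0 D2⁻¹ := by
          rw [← Matrix.mul_assoc X⁻¹ X BB, Matrix.nonsing_inv_mul _ hdet, Matrix.one_mul]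
  have hDM : DeltaM 0 Cp * BB = fromBlocks (Cp * Cpᴴ) 0 0 (Cp.map c * Cpᵀ) := by
    rw [DeltaM, hmap0, hBB, fromBlocks_multiply]
    simp
    rfl
  have hblk1 : s • (1 : Matrix (Fin m) (Fin m) ℂ) + (1/2 : ℂ) • (Cp * Cpᴴ)
      = D1 + Cp * Cpᴴ := by rw [hD1]; module
  have hblk2 : s • (1 : Matrix (Fin m) (Fin m) ℂ) + (1/2 : ℂ) • (Cp.map c * Cpᵀ)
      = D2 + Cp.map c * Cpᵀ := by rw [hD2]; module
  rw [ACG, hB, ← hX, Matrix.mul_assoc, hXB, ← Matrix.mul_assoc, hDM,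
    fromBlocks_multiply, hblk1, hblk2, Matrix.add_mul, Matrix.add_mul,
    Matrix.mul_nonsing_inv _ hD1det, Matrix.mul_nonsing_inv _ hD2det,
    ← fromBlocks_one, fromBlocks_add]
  simp
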